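/- arXiv:1202.2280 — 2 statements merged into one kernel-verified Lean document; each statement's English description precedes it below -/
import Mathlib

section
/- In a hyperbolic affine 2-space, an arrow is invertible if and only if it is an identity arrow. -/
/-- An affine 2-space: a (plainly presented) small category together with a
reflexive symmetric linkability relation `R` on objects and a map `phi` from
nonempty `R`-linkable sequences of objects (written target-first, i.e.
`φ(y,...,x)` is the list `[y,...,x]`) to morphisms, satisfying the axioms of
Viennot. -/
structure Affine2Space where
  O : Type
  M : Type
  src : M → O
  tgt : M → O
  ide : O → M
  comp : M → M → M
  src_ide : ∀ x, src (ide x) = x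
  tgt_ide : ∀ x, tgt (ide x) = x
  src_comp : ∀ g f, src g = tgt f → src (comp g f) = src f
  tgt_comp : ∀ g f, src g = tgt f → tgt (comp g f) = tgt g
  ide_comp : ∀ f, comp (ide (tgt f)) f = f
  comp_ide : ∀ f, comp f (ide (src f)) = f
  comp_assoc : ∀ h g f, src g = tgt f → src h = tgt g →
    comp h (comp g f) = comp (comp h g) f
  R : O → O → Prop
  R_refl : ∀ x, R x x
  R_symm : ∀ x y, R x y → R y x
  phi : List O → M
  -- axiom 0 : source and target of φ(y,...,x)
  phi_src : ∀ (l : List O) (h : l ≠ []), l.Chain' R → src (phi l) = l.getLast h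
  phi_tgt : ∀ (l : List O) (h : l ≠ []), l.Chain' R → tgt (phi l) = l.head h
  -- axiom i : φ(x) = id_x and deletion of consecutive repetitions
  phi_single : ∀ x, phi [x] = ide x
  phi_dedup : ∀ (l₁ l₂ : List O) (x : O), (l₁ ++ x :: x :: l₂).Chain' R →
    phi (l₁ ++ x :: x :: l₂) = phi (l₁ ++ x :: l₂)
  -- axiom ii : φ(z,...,y)∘φ(y,...,x) = φ(z,...,y,...,x)
  phi_comp : ∀ (l₁ l₂ : List O) (y : O), (l₂ ++ [y]).Chain' R → (y :: l₁).Chain' R →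
    comp (phi (l₂ ++ [y])) (phi (y :: l₁)) = phi (l₂ ++ y :: l₁)
  -- axiom iii : surjectivity and uniqueness of the minimal representing sequence
  phi_surj : ∀ f : M, ∃ l : List O, l ≠ [] ∧ l.Chain' R ∧ phi l = f
  phi_min_unique : ∀ (f : M) (l₁ l₂ : List O), l₁ ≠ [] → l₂ ≠ [] →
    l₁.Chain' R → l₂.Chain' R → phi l₁ = f → phi l₂ = f →
    (∀ l : List O, l ≠ [] → l.Chain' R → phi l = f → l₁.length ≤ l.length) →
    (∀ l : List O, l ≠ [] → l.Chain' R → phi l = f → l₂.length ≤ l.length) →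
    l₁ = l₂

/-- A Euclidean affine 2-space: `R` is transitive and `φ` of a linkable
sequence only depends on its endpoints: `φ(y,...,x) = φ(y,x)`. -/
def Affine2Space.Euclidean (A : Affine2Space) : Prop :=
  (∀ x y z, A.R x y → A.R y z → A.R x z) ∧
  (∀ (l : List A.O) (h : l ≠ []), l.Chain' A.R →
    A.phi l = A.phi [l.head h, l.getLast h])

open Classical in
/-- A hyperbolic affine 2-space: linkable sequences of every positive length
exist, and `φ(y₁,...,x₁) = φ(y₂,...,x₂)` forces the two sequences to be equal
modulo consecutive repetitions (the destuttered lists coincide). -/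
noncomputable def Affine2Space.Hyperbolic (A : Affine2Space) : Prop :=
  (∀ n : ℕ, 0 < n → ∃ l : List A.O, l.length = n ∧ l.Chain' A.R) ∧
  (∀ l₁ l₂ : List A.O, l₁ ≠ [] → l₂ ≠ [] → l₁.Chain' A.R → l₂.Chain' A.R →
    A.phi l₁ = A.phi l₂ →
    l₁.destutter (· ≠ ·) = l₂.destutter (· ≠ ·))

/-! A one-sided inverse `g` of `f = φ(l)` extends `l` on the left to a linkable sequence `m ++ l`
with `φ(m ++ l) = g ∘ f = id`. Hyperbolicity then forces `m ++ l` to be a repetition of a single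
object, so `l` is one too, and `f = φ(x, …, x) = id_x`. -/

namespace List

variable {α : Type*} [DecidableRel (α := α) (· ≠ ·)]

theorem mem_destutter'_ne {a b : α} {l : List α} :
    a ∈ l.destutter' (· ≠ ·) b ↔ a ∈ b :: l := by
  induction l generalizing b with
  | nil => simp [destutter'_nil]
  | cons c l ih =>
    by_cases hbc : b ≠ c
    · simp only [destutter'_cons_pos _ hbc, mem_cons, ih]
    · rw [destutter'_cons_neg _ hbc, ih, not_not.mp hbc]
      simp

theorem mem_destutter_ne {a : α} {l : List α} : a ∈ l.destutter (· ≠ ·) ↔ a ∈ l := by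
  cases l with
  | nil => simp
  | cons b l => rw [destutter_cons', mem_destutter'_ne]

end List

namespace Affine2Space

variable (A : Affine2Space)

theorem comp_ide_ide (x : A.O) : A.comp (A.ide x) (A.ide x) = A.ide x := by
  simpa only [A.src_ide] using A.comp_ide (A.ide x)

theorem phi_replicate (n : ℕ) (x : A.O) : A.phi (List.replicate (n + 1) x) = A.ide x := by
  induction n with
  | zero => exact A.phi_single x
  | succ n ih =>
    have hc : ([] ++ x :: x :: List.replicate n x).IsChain A.R :=
      List.isChain_replicate_of_rel (n + 2) (A.R_refl x)
    rw [List.replicate_succ, List.replicate_succ, ← List.nil_append (x :: x :: _),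
      A.phi_dedup [] _ x hc, List.nil_append, ← List.replicate_succ, ih]

theorem phi_eq_ide_of_forall_mem_eq {l : List A.O} (hl : l ≠ []) {x : A.O}
    (h : ∀ a ∈ l, a = x) : A.phi l = A.ide x := by
  obtain ⟨n, hn⟩ := Nat.exists_eq_succ_of_ne_zero (List.length_pos_iff.mpr hl).ne'
  rw [List.eq_replicate_iff.mpr ⟨hn, h⟩, A.phi_replicate]

theorem exists_phi_append_eq_comp {l : List A.O} (hl : l ≠ []) (hlc : l.IsChain A.R)
    {g : A.M} (hg : A.src g = A.tgt (A.phi l)) :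
    ∃ m, (m ++ l).IsChain A.R ∧ A.phi (m ++ l) = A.comp g (A.phi l) := by
  obtain ⟨m₀, hm₀, hm₀c, rfl⟩ := A.phi_surj g
  obtain ⟨m, y, rfl⟩ := (List.eq_nil_or_concat' m₀).resolve_left hm₀
  obtain ⟨z, l, rfl⟩ := List.exists_cons_of_ne_nil hl
  obtain rfl : y = z := by
    rwa [A.phi_src _ hm₀ hm₀c, A.phi_tgt _ hl hlc, List.getLast_concat, List.head_cons] at hg
  refine ⟨m, ?_, (A.phi_comp l m y hm₀c hlc).symm⟩
  simpa using hm₀c.append_overlap hlc (List.cons_ne_nil y [])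

theorem Hyperbolic.eq_of_mem_of_phi_eq_ide {A : Affine2Space} (hA : A.Hyperbolic)
    {l : List A.O} (hl : l ≠ []) (hlc : l.IsChain A.R) {x : A.O} (h : A.phi l = A.ide x) :
    ∀ a ∈ l, a = x := by
  classical
  have hdes := hA.2 l [x] hl (List.cons_ne_nil x []) hlc (List.isChain_singleton x)
    (by rw [h, A.phi_single])
  intro a ha
  have : a ∈ [x].destutter (· ≠ ·) := hdes ▸ List.mem_destutter_ne.mpr ha
  rwa [List.destutter_singleton, List.mem_singleton] at this

end Affine2Space

/-- In a hyperbolic affine 2-space, an arrow is invertible if and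
only if it is an identity arrow. -/
theorem hyperbolic_invertible_iff_identity (A : Affine2Space)
    (hA : A.Hyperbolic) (f : A.M) :
    (∃ g : A.M, A.src g = A.tgt f ∧ A.tgt g = A.src f ∧
      A.comp g f = A.ide (A.src f) ∧ A.comp f g = A.ide (A.tgt f)) ↔
    (∃ x : A.O, f = A.ide x) := by
  constructor
  · rintro ⟨g, hs, -, hgf, -⟩
    obtain ⟨l, hl, hlc, rfl⟩ := A.phi_surj f
    obtain ⟨m, hmlc, hml⟩ := A.exists_phi_append_eq_comp hl hlc hs
    have hml_const := hA.eq_of_mem_of_phi_eq_ide (by simp [hl]) hmlc (hml.trans hgf)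
    exact ⟨_, A.phi_eq_ide_of_forall_mem_eq hl fun a ha ↦
      hml_const a (List.mem_append_right m ha)⟩
  · rintro ⟨x, rfl⟩
    exact ⟨A.ide x, by rw [A.src_ide, A.tgt_ide], by rw [A.src_ide, A.tgt_ide],
      by rw [A.src_ide, A.comp_ide_ide], by rw [A.tgt_ide, A.comp_ide_ide]⟩
end

section
/- In a Euclidean affine 2-space with relation R transitive (hence an equivalence relation), the map sending a pair (y,x) with x R y to the morphism φ(y,x) is a bijection between the set of R-related ordered pairs of objects and the set of morphisms. -/
/-! Injectivity holds in every affine 2-space, because `φ(y,x)` has source `x` and target `y`.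
For surjectivity, write a morphism as `φ` of a linkable sequence: in a Euclidean space this
equals `φ` of its two endpoints, and these are related since `R` is transitive. -/

theorem List.IsChain.rel_head_getLast {α : Type*} {r : α → α → Prop} [Std.Refl r] [IsTrans α r]
    {l : List α} (hl : l.IsChain r) (hne : l ≠ []) : r (l.head hne) (l.getLast hne) :=
  Relation.reflTransGen_eq_self (r := r) ▸ List.relationReflTransGen_of_exists_isChain l hl hne

namespace Affine2Space

variable (A : Affine2Space)

theorem isChain_pair_of_rel {x y : A.O} (h : A.R x y) : [y, x].IsChain A.R :=
  List.isChain_pair.mpr (A.R_symm x y h)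

theorem src_phi_pair {x y : A.O} (h : A.R x y) : A.src (A.phi [y, x]) = x :=
  A.phi_src [y, x] (List.cons_ne_nil _ _) (A.isChain_pair_of_rel h)

theorem tgt_phi_pair {x y : A.O} (h : A.R x y) : A.tgt (A.phi [y, x]) = y :=
  A.phi_tgt [y, x] (List.cons_ne_nil _ _) (A.isChain_pair_of_rel h)

theorem phi_pair_injective :
    Function.Injective (fun p : {p : A.O × A.O // A.R p.2 p.1} => A.phi [p.1.1, p.1.2]) := by
  rintro ⟨⟨y₁, x₁⟩, (h₁ : A.R x₁ y₁)⟩ ⟨⟨y₂, x₂⟩, (h₂ : A.R x₂ y₂)⟩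
    (heq : A.phi [y₁, x₁] = A.phi [y₂, x₂])
  have hy : y₁ = y₂ := by rw [← A.tgt_phi_pair h₁, ← A.tgt_phi_pair h₂, heq]
  have hx : x₁ = x₂ := by rw [← A.src_phi_pair h₁, ← A.src_phi_pair h₂, heq]
  exact Subtype.ext (Prod.ext hy hx)

theorem Euclidean.exists_rel_phi_pair_eq {A : Affine2Space} (hA : A.Euclidean) (f : A.M) :
    ∃ x y, A.R x y ∧ A.phi [y, x] = f := by
  obtain ⟨l, hne, hl, rfl⟩ := A.phi_surj f
  have : Std.Refl A.R := ⟨A.R_refl⟩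
  have : IsTrans A.O A.R := ⟨hA.1⟩
  exact ⟨l.getLast hne, l.head hne, A.R_symm _ _ (hl.rel_head_getLast hne), (hA.2 l hne hl).symm⟩

end Affine2Space

/-- In a Euclidean affine 2-space (so `R` is transitive, hence an
equivalence relation), the map sending a pair `(y,x)` with `x R y` to the
morphism `φ(y,x)` is a bijection from the set of `R`-related ordered pairs
of objects onto the set of morphisms. -/
theorem euclidean_pairs_bijective_morphisms (A : Affine2Space)
    (hA : A.Euclidean) :
    Function.Bijective
      (fun p : {p : A.O × A.O // A.R p.2 p.1} => A.phi [p.1.1, p.1.2]) := by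
  refine ⟨A.phi_pair_injective, fun f => ?_⟩
  obtain ⟨x, y, hxy, hf⟩ := hA.exists_rel_phi_pair_eq f
  exact ⟨⟨(y, x), hxy⟩, hf⟩
end
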